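/- For any submodular cooperative cost game (N, v), the Shapley value lies in the core: the allocation ψ_n = (1/|N|!) ∑_{S ⊆ N∖{n}} |S|!(|N|−|S|−1)! (v(S∪{n}) − v(S)) satisfies ∑_{n∈N} ψ_n = v(N) and ∑_{n∈S} ψ_n ≤ v(S) for all S ⊆ N. -/
import Mathlib

open Finset

section Aux
variable {N : Type*} [Fintype N] [DecidableEq N]

/-- predecessors of `n` under the ordering `e` -/
def predE (e : Fin (Fintype.card N) ≃ N) (n : N) : Finset N :=
  univ.filter fun x => e.symm x < e.symm n

lemma telescope (v : Finset N → ℝ) (e : Fin (Fintype.card N) ≃ N) (S : Finset N) :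
    ∑ n ∈ S, (v (insert n (S.filter fun x => e.symm x < e.symm n)) -
      v (S.filter fun x => e.symm x < e.symm n)) = v S - v ∅ := by
  let g : ℕ → Finset N := fun c => S.filter fun x => (e.symm x : ℕ) < c
  have hg0 : g 0 = ∅ := by simp [g]
  have hgm : g (Fintype.card N) = S :=
    filter_true_of_mem fun x _ => (e.symm x).isLt
  have key : ∀ i : Fin (Fintype.card N), v (g ((i : ℕ) + 1)) - v (g i) =
      if e i ∈ S then
        (v (insert (e i) (S.filter fun x => e.symm x < e.symm (e i))) -
          v (S.filter fun x => e.symm x < e.symm (e i))) else 0 := by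
    intro i
    have hfilter : (S.filter fun x => e.symm x < e.symm (e i)) = g i := by
      apply filter_congr
      intro x _
      simp only [Equiv.symm_apply_apply, Fin.lt_def]
    by_cases hi : e i ∈ S
    · rw [if_pos hi, hfilter]
      congr 2
      show g ((i : ℕ) + 1) = insert (e i) (g i)
      ext x
      simp only [g, mem_insert, mem_filter, Nat.lt_succ_iff_lt_or_eq]
      constructor
      · rintro ⟨hx, h | h⟩
        · exact Or.inr ⟨hx, h⟩
        · left
          have : e.symm x = i := Fin.ext h
          rw [← this, Equiv.apply_symm_apply]
      · rintro (h | ⟨hx, h⟩)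
        · subst h
          simp [hi]
        · exact ⟨hx, Or.inl h⟩
    · rw [if_neg hi]
      have : g ((i : ℕ) + 1) = g i := by
        ext x
        simp only [g, mem_filter, Nat.lt_succ_iff_lt_or_eq]
        constructor
        · rintro ⟨hx, h | h⟩
          · exact ⟨hx, h⟩
          · exfalso
            have : e.symm x = i := Fin.ext h
            rw [← this, Equiv.apply_symm_apply] at hi
            exact hi hx
        · rintro ⟨hx, h⟩; exact ⟨hx, Or.inl h⟩
      rw [this, sub_self]
  calc ∑ n ∈ S, (v (insert n (S.filter fun x => e.symm x < e.symm n)) -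
          v (S.filter fun x => e.symm x < e.symm n))
      = ∑ n : N, if n ∈ S then (v (insert n (S.filter fun x => e.symm x < e.symm n)) -
          v (S.filter fun x => e.symm x < e.symm n)) else 0 := by
        rw [Finset.sum_ite_mem, univ_inter]
    _ = ∑ i : Fin (Fintype.card N), (if e i ∈ S then (v (insert (e i) (S.filter fun x => e.symm x < e.symm (e i))) -
          v (S.filter fun x => e.symm x < e.symm (e i))) else 0) := by
        exact (Equiv.sum_comp e fun n => if n ∈ S then (v (insert n (S.filter fun x => e.symm x < e.symm n)) - v (S.filter fun x => e.symm x < e.symm n)) else 0).symm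
    _ = ∑ i : Fin (Fintype.card N), (v (g ((i : ℕ) + 1)) - v (g i)) :=
        Finset.sum_congr rfl fun i _ => (key i).symm
    _ = ∑ c ∈ range (Fintype.card N), (v (g (c + 1)) - v (g c)) :=
        Fin.sum_univ_eq_sum_range (fun c => v (g (c + 1)) - v (g c)) _
    _ = v (g (Fintype.card N)) - v (g 0) := Finset.sum_range_sub (fun c => v (g c)) _
    _ = v S - v ∅ := by rw [hg0, hgm]

lemma marg_eq (v : Finset N → ℝ) (e : Fin (Fintype.card N) ≃ N) :
    ∑ n : N, (v (insert n (predE e n)) - v (predE e n)) = v univ - v ∅ := by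
  simpa [predE] using telescope v e univ

lemma marg_le (v : Finset N → ℝ)
    (hsub : ∀ (i : N) (S T : Finset N), S ⊆ T → i ∉ T →
      v (insert i T) - v T ≤ v (insert i S) - v S)
    (e : Fin (Fintype.card N) ≃ N) (S : Finset N) :
    ∑ n ∈ S, (v (insert n (predE e n)) - v (predE e n)) ≤ v S - v ∅ := by
  rw [← telescope v e S]
  apply Finset.sum_le_sum
  intro n _
  apply hsub
  · exact filter_subset_filter _ (subset_univ S)
  · simp [predE]

lemma count_fiber (n : N) (S : Finset N) (hS : S ⊆ univ.erase n) :
    (univ.filter fun e : Fin (Fintype.card N) ≃ N => predE e n = S).card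
      = S.card.factorial * (Fintype.card N - S.card - 1).factorial := by
  classical
  have hn : n ∉ S := fun h => (mem_erase.mp (hS h)).1 rfl
  have hins : (insert n S).card = S.card + 1 := card_insert_of_notMem hn
  have hk1 : S.card + 1 ≤ Fintype.card N := by
    rw [← hins, ← card_univ]; exact card_le_card (subset_univ _)
  have hTcard : Fintype.card {x // x ∈ (insert n S)ᶜ} = Fintype.card N - S.card - 1 := by
    rw [Fintype.card_coe, card_compl, hins]; omega
  have hScard : Fintype.card {x // x ∈ S} = S.card := Fintype.card_coe S
  -- the forward map, as a raw function
  let f : (Fin S.card ≃ {x // x ∈ S}) ×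
      (Fin (Fintype.card N - S.card - 1) ≃ {x // x ∈ (insert n S)ᶜ}) →
      (Fin (Fintype.card N) → N) := fun p i =>
    if h : (i : ℕ) < S.card then (p.1 ⟨i, h⟩ : N)
    else if h2 : (i : ℕ) < S.card + 1 then n
    else (p.2 ⟨(i : ℕ) - (S.card + 1), by have := i.isLt; omega⟩ : N)
  have hf1 : ∀ p : (Fin S.card ≃ {x // x ∈ S}) ×
      (Fin (Fintype.card N - S.card - 1) ≃ {x // x ∈ (insert n S)ᶜ}), ∀ (i : Fin (Fintype.card N)) (h : (i : ℕ) < S.card),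
      f p i = p.1 ⟨i, h⟩ := by
    intro p i h; simp only [f]; rw [dif_pos h]
  have hf2 : ∀ p : (Fin S.card ≃ {x // x ∈ S}) ×
      (Fin (Fintype.card N - S.card - 1) ≃ {x // x ∈ (insert n S)ᶜ}), ∀ (i : Fin (Fintype.card N)), (i : ℕ) = S.card → f p i = n := by
    intro p i h; simp only [f]; rw [dif_neg (by omega), dif_pos (by omega)]
  have hf3 : ∀ p : (Fin S.card ≃ {x // x ∈ S}) ×
      (Fin (Fintype.card N - S.card - 1) ≃ {x // x ∈ (insert n S)ᶜ}), ∀ (i : Fin (Fintype.card N)) (h : S.card + 1 ≤ (i : ℕ)),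
      f p i = p.2 ⟨(i : ℕ) - (S.card + 1), by have := i.isLt; omega⟩ := by
    intro p i h; simp only [f]; rw [dif_neg (by omega), dif_neg (by omega)]
  have hbS : ∀ p : (Fin S.card ≃ {x // x ∈ S}) ×
      (Fin (Fintype.card N - S.card - 1) ≃ {x // x ∈ (insert n S)ᶜ}), ∀ (j : Fin (Fintype.card N - S.card - 1)), ((p.2 j : N)) ∉ S := by
    intro p j hmem
    have := (p.2 j).2
    rw [mem_compl] at this
    exact this (mem_insert_of_mem hmem)
  have hbn : ∀ p : (Fin S.card ≃ {x // x ∈ S}) ×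
      (Fin (Fintype.card N - S.card - 1) ≃ {x // x ∈ (insert n S)ᶜ}), ∀ (j : Fin (Fintype.card N - S.card - 1)), ((p.2 j : N)) ≠ n := by
    intro p j hmem
    have := (p.2 j).2
    rw [mem_compl] at this
    exact this (by rw [hmem]; exact mem_insert_self n S)
  have hinj : ∀ p, Function.Injective (f p) := by
    intro p i j hij
    apply Fin.ext
    by_cases hi : (i : ℕ) < S.card <;> by_cases hj : (j : ℕ) < S.card
    · rw [hf1 p i hi, hf1 p j hj] at hij
      have h2 := p.1.injective (Subtype.ext hij)
      simp only [Fin.mk.injEq] at h2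
      exact h2
    · exfalso
      rw [hf1 p i hi] at hij
      by_cases hj2 : (j : ℕ) < S.card + 1
      · rw [hf2 p j (by omega)] at hij
        exact hn (by rw [← hij]; exact (p.1 ⟨i, hi⟩).2)
      · rw [hf3 p j (by omega)] at hij
        exact hbS p _ (by rw [← hij]; exact (p.1 ⟨i, hi⟩).2)
    · exfalso
      rw [hf1 p j hj] at hij
      by_cases hi2 : (i : ℕ) < S.card + 1
      · rw [hf2 p i (by omega)] at hij
        exact hn (by rw [hij]; exact (p.1 ⟨j, hj⟩).2)
      · rw [hf3 p i (by omega)] at hij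
        exact hbS p _ (by rw [hij]; exact (p.1 ⟨j, hj⟩).2)
    · by_cases hi2 : (i : ℕ) < S.card + 1 <;> by_cases hj2 : (j : ℕ) < S.card + 1
      · omega
      · exfalso
        rw [hf2 p i (by omega), hf3 p j (by omega)] at hij
        exact hbn p _ hij.symm
      · exfalso
        rw [hf2 p j (by omega), hf3 p i (by omega)] at hij
        exact hbn p _ hij
      · rw [hf3 p i (by omega), hf3 p j (by omega)] at hij
        have h2 := p.2.injective (Subtype.ext hij)
        simp only [Fin.mk.injEq] at h2
        omega
  have hbij : ∀ p, Function.Bijective (f p) := fun p =>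
    (Fintype.bijective_iff_injective_and_card _).mpr ⟨hinj p, by simp⟩
  -- the map into the fiber
  set Ψ : (Fin S.card ≃ {x // x ∈ S}) ×
      (Fin (Fintype.card N - S.card - 1) ≃ {x // x ∈ (insert n S)ᶜ}) →
      {e : Fin (Fintype.card N) ≃ N // predE e n = S} := fun p =>
    ⟨Equiv.ofBijective (f p) (hbij p), by
      have hke : (⟨S.card, by omega⟩ : Fin (Fintype.card N)) =
          (Equiv.ofBijective (f p) (hbij p)).symm n := by
        rw [Equiv.eq_symm_apply]
        exact hf2 p ⟨S.card, by omega⟩ rfl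
      ext x
      simp only [predE, mem_filter, mem_univ, true_and]
      rw [← hke]
      constructor
      · intro hx
        rw [Fin.lt_def] at hx
        have hx' : ((Equiv.ofBijective (f p) (hbij p)).symm x : ℕ) < S.card := hx
        have h2 : f p ((Equiv.ofBijective (f p) (hbij p)).symm x) = x :=
          (Equiv.ofBijective (f p) (hbij p)).apply_symm_apply x
        rw [hf1 p _ hx'] at h2
        rw [← h2]; exact (p.1 _).2
      · intro hx
        have hlt : ((p.1.symm ⟨x, hx⟩ : Fin S.card) : ℕ) < Fintype.card N := by
          have := (p.1.symm ⟨x, hx⟩).isLt; omega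
        have h2 : f p ⟨(p.1.symm ⟨x, hx⟩ : Fin S.card), hlt⟩ = x := by
          rw [hf1 p _ (by exact (p.1.symm ⟨x, hx⟩).isLt)]
          rw [Fin.eta, Equiv.apply_symm_apply]
        have h3 : (Equiv.ofBijective (f p) (hbij p)).symm x =
            ⟨(p.1.symm ⟨x, hx⟩ : Fin S.card), hlt⟩ := by
          rw [Equiv.symm_apply_eq]; exact h2.symm
        rw [h3, Fin.lt_def]
        exact (p.1.symm ⟨x, hx⟩).isLt⟩ with hΨ
  have hΨinj : Function.Injective Ψ := by
    intro p q h
    have h1 : ∀ i, f p i = f q i := by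
      intro i
      have h0 := congrArg Subtype.val h
      simp only [hΨ] at h0
      exact DFunLike.congr_fun h0 i
    have ha : p.1 = q.1 := by
      apply Equiv.ext
      intro j
      have hj : ((j : ℕ) : ℕ) < Fintype.card N := by have := j.isLt; omega
      have := h1 ⟨(j : ℕ), hj⟩
      rw [hf1 p _ j.isLt, hf1 q _ j.isLt] at this
      simpa [Fin.eta] using Subtype.ext this
    have hb : p.2 = q.2 := by
      apply Equiv.ext
      intro j
      have hj : S.card + 1 + (j : ℕ) < Fintype.card N := by have := j.isLt; omega
      have := h1 ⟨S.card + 1 + (j : ℕ), hj⟩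
      rw [hf3 p _ (by simp), hf3 q _ (by simp)] at this
      have hidx : (⟨S.card + 1 + (j : ℕ) - (S.card + 1), by have := j.isLt; omega⟩ :
          Fin (Fintype.card N - S.card - 1)) = j :=
        Fin.ext (show S.card + 1 + (j : ℕ) - (S.card + 1) = (j : ℕ) by omega)
      rw [hidx] at this
      exact Subtype.ext this
    exact Prod.ext ha hb
  have hΨsurj : Function.Surjective Ψ := by
    rintro ⟨e, he⟩
    have hS_img : S = (Finset.Iio (e.symm n)).image e := by
      rw [← he]
      ext x
      simp only [predE, mem_filter, mem_univ, true_and, mem_image, mem_Iio]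
      constructor
      · intro hx
        exact ⟨e.symm x, hx, e.apply_symm_apply x⟩
      · rintro ⟨j, hj, rfl⟩
        rwa [Equiv.symm_apply_apply]
    have hpos : ((e.symm n : Fin (Fintype.card N)) : ℕ) = S.card := by
      have := congrArg Finset.card hS_img
      rw [card_image_of_injective _ e.injective, Fin.card_Iio] at this
      omega
    have hmemS : ∀ i : Fin (Fintype.card N), (i : ℕ) < S.card → e i ∈ S := by
      intro i hi
      rw [← he]
      simp only [predE, mem_filter, mem_univ, true_and, Equiv.symm_apply_apply]
      rw [Fin.lt_def, hpos]
      exact hi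
    let fa : Fin S.card → {x // x ∈ S} := fun j =>
      ⟨e ⟨(j : ℕ), by have := j.isLt; omega⟩, hmemS _ j.isLt⟩
    have hfa : Function.Bijective fa := by
      rw [Fintype.bijective_iff_injective_and_card]
      refine ⟨?_, by rw [Fintype.card_fin, hScard]⟩
      intro j1 j2 hj
      simp only [fa, Subtype.mk.injEq] at hj
      have h2 := e.injective hj
      simp only [Fin.mk.injEq] at h2
      exact Fin.ext h2
    let fb : Fin (Fintype.card N - S.card - 1) → {x // x ∈ (insert n S)ᶜ} := fun j =>
      ⟨e ⟨S.card + 1 + (j : ℕ), by have := j.isLt; omega⟩, by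
        rw [mem_compl, mem_insert]
        rintro (h | h)
        · have : (⟨S.card + 1 + (j : ℕ), by have := j.isLt; omega⟩ :
              Fin (Fintype.card N)) = e.symm n := by
            rw [Equiv.eq_symm_apply]; exact h
          have := congrArg Fin.val this
          simp only [hpos] at this
          omega
        · have h' : e ⟨S.card + 1 + (j : ℕ), by have := j.isLt; omega⟩ ∈ predE e n := by
            rw [he]; exact h
          simp only [predE, mem_filter, mem_univ, true_and,
            Equiv.symm_apply_apply, Fin.lt_def, hpos] at h'
          omega⟩
    have hfb : Function.Bijective fb := by
      rw [Fintype.bijective_iff_injective_and_card]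
      refine ⟨?_, by rw [Fintype.card_fin, hTcard]⟩
      intro j1 j2 hj
      simp only [fb, Subtype.mk.injEq] at hj
      have h2 := e.injective hj
      simp only [Fin.mk.injEq] at h2
      exact Fin.ext (by omega)
    refine ⟨(Equiv.ofBijective fa hfa, Equiv.ofBijective fb hfb), ?_⟩
    apply Subtype.ext
    apply Equiv.ext
    intro i
    show f _ i = e i
    by_cases hi : (i : ℕ) < S.card
    · rw [hf1 _ _ hi]
      show (fa ⟨(i : ℕ), hi⟩ : N) = e i
      simp only [fa]
    · by_cases hi2 : (i : ℕ) < S.card + 1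
      · rw [hf2 _ _ (by omega)]
        have : i = e.symm n := Fin.ext (by omega)
        rw [this, Equiv.apply_symm_apply]
      · rw [hf3 _ _ (by omega)]
        show (fb ⟨(i : ℕ) - (S.card + 1), _⟩ : N) = e i
        simp only [fb]
        exact congrArg e (Fin.ext (by simp; omega))
  have hcard : Fintype.card {e : Fin (Fintype.card N) ≃ N // predE e n = S} =
      S.card.factorial * (Fintype.card N - S.card - 1).factorial := by
    rw [← Fintype.card_of_bijective ⟨hΨinj, hΨsurj⟩, Fintype.card_prod,
      Fintype.card_equiv (Fintype.equivFinOfCardEq hScard).symm,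
      Fintype.card_equiv (Fintype.equivFinOfCardEq hTcard).symm]
    simp
  rw [← Fintype.card_subtype, hcard]

lemma marg_avg (v : Finset N → ℝ) (n : N) :
    ∑ e : Fin (Fintype.card N) ≃ N, (v (insert n (predE e n)) - v (predE e n)) =
      ∑ S ∈ (Finset.univ.erase n).powerset,
        (S.card.factorial * (Fintype.card N - S.card - 1).factorial : ℝ) *
          (v (insert n S) - v S) := by
  classical
  have hmaps : ∀ e ∈ (univ : Finset (Fin (Fintype.card N) ≃ N)),
      predE e n ∈ (Finset.univ.erase n).powerset := by
    intro e _
    rw [mem_powerset]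
    intro x hx
    simp only [predE, mem_filter] at hx
    rw [mem_erase]
    refine ⟨fun h => ?_, mem_univ x⟩
    subst h
    exact lt_irrefl _ hx.2
  rw [← Finset.sum_fiberwise_of_maps_to hmaps
    (fun e => v (insert n (predE e n)) - v (predE e n))]
  apply Finset.sum_congr rfl
  intro S hSmem
  have hS : S ⊆ univ.erase n := mem_powerset.mp hSmem
  have : ∀ e ∈ univ.filter (fun e : Fin (Fintype.card N) ≃ N => predE e n = S),
      v (insert n (predE e n)) - v (predE e n) = v (insert n S) - v S := by
    intro e he
    rw [(mem_filter.mp he).2]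
  rw [Finset.sum_congr rfl this, Finset.sum_const, count_fiber n S hS]
  rw [nsmul_eq_mul]
  push_cast
  ring

end Aux

/-- The Shapley value of player `n` in the cost game `(N, v)`. -/
noncomputable def shapley {N : Type*} [Fintype N] [DecidableEq N]
    (v : Finset N → ℝ) (n : N) : ℝ :=
  (1 / (Fintype.card N).factorial : ℝ) *
    ∑ S ∈ (Finset.univ.erase n).powerset,
      (S.card.factorial * (Fintype.card N - S.card - 1).factorial : ℝ) *
        (v (insert n S) - v S)

/-- For a submodular cooperative cost game, the Shapley value lies in the core. -/
theorem shapley_in_core_of_submodular {N : Type*} [Fintype N] [DecidableEq N]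
    [Nonempty N] (v : Finset N → ℝ) (hv0 : v ∅ = 0)
    (hsub : ∀ (i : N) (S T : Finset N), S ⊆ T → i ∉ T →
      v (insert i T) - v T ≤ v (insert i S) - v S) :
    (∑ n, shapley v n) = v Finset.univ ∧
    ∀ S : Finset N, (∑ n ∈ S, shapley v n) ≤ v S := by
  classical
  have hfact : ((Fintype.card N).factorial : ℝ) ≠ 0 :=
    Nat.cast_ne_zero.mpr (Nat.factorial_ne_zero _)
  have hfpos : (0 : ℝ) ≤ 1 / (Fintype.card N).factorial := by positivity
  have hcardE : (Fintype.card (Fin (Fintype.card N) ≃ N)) = (Fintype.card N).factorial := by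
    rw [Fintype.card_equiv (Fintype.equivFin N).symm, Fintype.card_fin]
  have key : ∀ n : N, shapley v n = (1 / (Fintype.card N).factorial : ℝ) *
      ∑ e : Fin (Fintype.card N) ≃ N, (v (insert n (predE e n)) - v (predE e n)) := by
    intro n
    rw [shapley, marg_avg]
  constructor
  · calc ∑ n, shapley v n
        = (1 / (Fintype.card N).factorial : ℝ) *
          ∑ e : Fin (Fintype.card N) ≃ N, ∑ n : N,
            (v (insert n (predE e n)) - v (predE e n)) := by
          rw [Finset.sum_congr rfl fun n _ => key n, ← Finset.mul_sum,
            Finset.sum_comm]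
      _ = (1 / (Fintype.card N).factorial : ℝ) *
          ∑ e : Fin (Fintype.card N) ≃ N, (v univ - v ∅) := by
          rw [Finset.sum_congr rfl fun e _ => marg_eq v e]
      _ = v univ := by
          rw [Finset.sum_const, card_univ, hcardE, hv0, sub_zero, nsmul_eq_mul,
            ← mul_assoc, one_div, inv_mul_cancel₀ hfact, one_mul]
  · intro S
    calc ∑ n ∈ S, shapley v n
        = (1 / (Fintype.card N).factorial : ℝ) *
          ∑ e : Fin (Fintype.card N) ≃ N, ∑ n ∈ S,
            (v (insert n (predE e n)) - v (predE e n)) := by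
          rw [Finset.sum_congr rfl fun n _ => key n, ← Finset.mul_sum,
            Finset.sum_comm]
      _ ≤ (1 / (Fintype.card N).factorial : ℝ) *
          ∑ e : Fin (Fintype.card N) ≃ N, (v S - v ∅) := by
          apply mul_le_mul_of_nonneg_left _ hfpos
          exact Finset.sum_le_sum fun e _ => marg_le v hsub e S
      _ = v S := by
          rw [Finset.sum_const, card_univ, hcardE, hv0, sub_zero, nsmul_eq_mul,
            ← mul_assoc, one_div, inv_mul_cancel₀ hfact, one_mul]
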